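/- Let K ≥ 1, n ≥ K+1 be integers and s ∈ [0,1]. Under the random pruning-edge model, the variance of |Z| equals Σ_{v=K+2}^{n} (1-s)^{(v-K-1)(n-v+1)} − Σ_{v=K+2}^{n} (1-s)^{2(v-K-1)(n-v+1)} + 2·Σ_{K+2 ≤ v₁ < v₂ ≤ n} (1-s)^{(v₁-K-1)(n-v₁+1) + (v₂-v₁)(n-v₂+1)} − 2·Σ_{K+2 ≤ v₁ < v₂ ≤ n} (1-s)^{(v₁-K-1)(n-v₁+1) + (v₂-K-1)(n-v₂+1)}. -/

import Mathlib

open MeasureTheory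

/-- Potential pruning edges: pairs `(u,w)` with `1 ≤ u` and `u + K < w ≤ n`. -/
abbrev EdgeIdx (K n : ℕ) : Type :=
  {p : Fin (n + 1) × Fin (n + 1) // 1 ≤ (p.1 : ℕ) ∧ (p.1 : ℕ) + K < (p.2 : ℕ)}

/-- The pruning edge `e` covers the vertex `v` if `u + K < v ≤ w`. -/
def covers {K n : ℕ} (e : EdgeIdx K n) (v : ℕ) : Prop :=
  (e.1.1 : ℕ) + K < v ∧ v ≤ (e.1.2 : ℕ)

instance {K n : ℕ} (e : EdgeIdx K n) (v : ℕ) : Decidable (covers e v) := by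
  unfold covers; infer_instance

/-- The set `Z(ω)` of vertices `v ∈ {K+1, …, n}` covered by no present pruning edge. -/
def Zset (K n : ℕ) (ω : EdgeIdx K n → Bool) : Finset ℕ :=
  (Finset.Icc (K + 1) n).filter fun v => ∀ e : EdgeIdx K n, ω e = true → ¬ covers e v

/-- The product probability measure on outcomes `ω : EdgeIdx K n → Bool`, where each
potential pruning edge is independently present with probability `s` (for `s ∈ [0,1]`;
the parameter is clamped to `[0,1]`, which is the identity for such `s`). -/
noncomputable def prunMeasure (K n : ℕ) (s : ℝ) : Measure (EdgeIdx K n → Bool) :=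
  Measure.pi fun _ =>
    (PMF.bernoulli (min (Real.toNNReal s) 1) (min_le_right _ _)).toMeasure

/-!
`|Z|` is the sum over `v ∈ [K+1, n]` of the indicator that every edge covering `v` is absent,
an event of probability `(1-s)^(#edges covering v)`. Expanding the square, the variance is the sum
over all pairs `(a, b)` of `(1-s)^#(cov a ∪ cov b) - (1-s)^(#cov a + #cov b)`. The edges covering
`v` are the pairs with `u ≤ v-K-1` and `w ≥ v`, so there are `(v-K-1)(n-v+1)` of them, and for
`a < b` the edges covering both are those with `u ≤ a-K-1`, `w ≥ b`. The double sum is symmetric,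
so it is its diagonal plus twice its upper triangle; the vertex `K+1` contributes nothing.
-/

open Finset
open scoped NNReal

section IndicatorSums

variable {Ω α : Type*} [MeasurableSpace Ω] {μ : Measure Ω} [IsFiniteMeasure μ]
  {A : α → Set Ω}

lemma integral_sum_indicator_one (hA : ∀ a, MeasurableSet (A a)) (S : Finset α) :
    ∫ ω, ∑ a ∈ S, (A a).indicator (1 : Ω → ℝ) ω ∂μ = ∑ a ∈ S, μ.real (A a) := by
  rw [integral_finsetSum _ fun a _ => (integrable_const 1).indicator (hA a)]
  simp_rw [integral_indicator_one (hA _)]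

lemma integral_sum_indicator_one_sq_sub_sq (hA : ∀ a, MeasurableSet (A a)) (S : Finset α) :
    ∫ ω, (∑ a ∈ S, (A a).indicator (1 : Ω → ℝ) ω) ^ 2 ∂μ
        - (∫ ω, ∑ a ∈ S, (A a).indicator (1 : Ω → ℝ) ω ∂μ) ^ 2
      = ∑ a ∈ S, ∑ b ∈ S, (μ.real (A a ∩ A b) - μ.real (A a) * μ.real (A b)) := by
  have hsq (ω : Ω) : (∑ a ∈ S, (A a).indicator (1 : Ω → ℝ) ω) ^ 2
      = ∑ p ∈ (S ×ˢ S : Finset (α × α)), (A p.1 ∩ A p.2).indicator 1 ω := by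
    simp_rw [sq, sum_mul_sum, sum_product, Set.inter_indicator_one, Pi.mul_apply]
  simp_rw [hsq, integral_sum_indicator_one (fun p : α × α => (hA p.1).inter (hA p.2)),
    integral_sum_indicator_one hA, sum_product, sq, sum_mul_sum, ← sum_sub_distrib]

end IndicatorSums

lemma Finset.sum_sum_eq_sum_add_two_mul_sum_sum_lt {α β : Type*} [LinearOrder α]
    [NonAssocSemiring β] (S : Finset α) (f : α → α → β) (hf : ∀ a b, f a b = f b a) :
    ∑ a ∈ S, ∑ b ∈ S, f a b = ∑ a ∈ S, f a a + 2 * ∑ a ∈ S, ∑ b ∈ S with a < b, f a b := by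
  have htri (a b : α) : f a b
      = (if a < b then f a b else 0) + (if a = b then f a b else 0) + (if b < a then f b a else 0) := by
    rcases lt_trichotomy a b with h | rfl | h
    · simp [h, h.ne, h.not_gt]
    · simp
    · simp [h, h.ne', h.not_gt, hf a b]
  have hswap : ∑ a ∈ S, ∑ b ∈ S, (if b < a then f b a else 0)
      = ∑ a ∈ S, ∑ b ∈ S, (if a < b then f a b else 0) := sum_comm
  simp_rw [sum_filter]
  conv_lhs => enter [2, a, 2, b]; rw [htri a b]
  simp only [sum_add_distrib]
  rw [hswap, sum_congr rfl fun a ha => sum_ite_eq S a (f a) |>.trans (if_pos ha), two_mul]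
  abel

lemma measureReal_pi_bernoulli_pi_false {ι : Type*} [Fintype ι] (p : ℝ≥0) (hp : p ≤ 1)
    (T : Finset ι) :
    (Measure.pi fun _ : ι => (PMF.bernoulli p hp).toMeasure).real ((T : Set ι).pi fun _ => {false})
      = (1 - p : ℝ) ^ #T := by
  rw [measureReal_def, Measure.pi_pi_finset, prod_const, ENNReal.toReal_pow,
    PMF.toMeasure_apply_singleton _ _ (measurableSet_singleton _), PMF.bernoulli_apply]
  simp [ENNReal.toReal_sub_of_le (ENNReal.coe_le_one_iff.mpr hp) ENNReal.one_ne_top]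

instance (K n : ℕ) (s : ℝ) : IsProbabilityMeasure (prunMeasure K n s) := by
  unfold prunMeasure; infer_instance

lemma measureReal_prunMeasure_pi_false {K n : ℕ} {s : ℝ} (hs0 : 0 ≤ s) (hs1 : s ≤ 1)
    (T : Finset (EdgeIdx K n)) :
    (prunMeasure K n s).real ((T : Set (EdgeIdx K n)).pi fun _ => {false}) = (1 - s) ^ #T := by
  rw [prunMeasure, measureReal_pi_bernoulli_pi_false, min_eq_left (by simpa using hs1),
    Real.coe_toNNReal _ hs0]

section Covering

variable {K n : ℕ}

lemma card_edges_lt_le {v v' : ℕ} (hvv' : v ≤ v') (hv' : v' ≤ n) :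
    #{e : EdgeIdx K n | (e.1.1 : ℕ) + K < v ∧ v' ≤ (e.1.2 : ℕ)} = (v - K - 1) * (n - v' + 1) := by
  have hu : #(Icc 1 (v - K - 1)) = v - K - 1 := by simp
  have hw : #(Icc v' n) = n - v' + 1 := by simp; omega
  rw [← hu, ← hw, ← card_product]
  refine card_bij (fun e _ => ((e.1.1 : ℕ), (e.1.2 : ℕ))) ?_ ?_ ?_
  · rintro ⟨⟨u, w⟩, hu, huw⟩ he
    simp only [mem_filter_univ, mem_product, mem_Icc] at hu huw he ⊢
    have := w.isLt
    omega
  · rintro ⟨⟨u₁, w₁⟩, h₁⟩ _ ⟨⟨u₂, w₂⟩, h₂⟩ _ h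
    simp only [Prod.mk.injEq] at h
    exact Subtype.ext (Prod.ext (Fin.ext h.1) (Fin.ext h.2))
  · rintro ⟨u, w⟩ hp
    simp only [mem_product, mem_Icc] at hp
    refine ⟨⟨(⟨u, by omega⟩, ⟨w, by omega⟩), hp.1.1, show u + K < w by omega⟩, ?_, rfl⟩
    simp only [mem_filter_univ]
    omega

variable (K n) in
def coveringEdges (v : ℕ) : Finset (EdgeIdx K n) := {e | covers e v}

@[simp]
lemma mem_coveringEdges {v : ℕ} {e : EdgeIdx K n} :
    e ∈ coveringEdges K n v ↔ (e.1.1 : ℕ) + K < v ∧ v ≤ (e.1.2 : ℕ) :=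
  mem_filter_univ e

lemma coveringEdges_add_one : coveringEdges K n (K + 1) = ∅ :=
  filter_false_of_mem fun e _ he => by have := e.2.1; unfold covers at he; omega

lemma card_coveringEdges {v : ℕ} (hv : v ≤ n) :
    #(coveringEdges K n v) = (v - K - 1) * (n - v + 1) :=
  card_edges_lt_le le_rfl hv

lemma card_coveringEdges_union {v₁ v₂ : ℕ} (h₁ : K + 1 ≤ v₁) (h₁₂ : v₁ ≤ v₂) (h₂ : v₂ ≤ n) :
    #(coveringEdges K n v₁ ∪ coveringEdges K n v₂)
      = (v₁ - K - 1) * (n - v₁ + 1) + (v₂ - v₁) * (n - v₂ + 1) := by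
  have hinter : coveringEdges K n v₁ ∩ coveringEdges K n v₂
      = ({e | (e.1.1 : ℕ) + K < v₁ ∧ v₂ ≤ (e.1.2 : ℕ)} : Finset (EdgeIdx K n)) := by
    ext e
    simp only [mem_inter, mem_coveringEdges, mem_filter_univ]
    omega
  have h := card_union_add_card_inter (coveringEdges K n v₁) (coveringEdges K n v₂)
  rw [hinter, card_coveringEdges (h₁₂.trans h₂), card_coveringEdges h₂,
    card_edges_lt_le h₁₂ h₂] at h
  have hsplit : v₂ - K - 1 = (v₁ - K - 1) + (v₂ - v₁) := by omega
  rw [hsplit, add_mul] at h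
  omega

lemma card_Zset (ω : EdgeIdx K n → Bool) :
    (#(Zset K n ω) : ℝ) = ∑ v ∈ Icc (K + 1) n,
      ((coveringEdges K n v : Set (EdgeIdx K n)).pi fun _ => {false}).indicator 1 ω := by
  rw [Zset, card_filter, Nat.cast_sum]
  refine sum_congr rfl fun v _ => ?_
  have hmem : ω ∈ (coveringEdges K n v : Set (EdgeIdx K n)).pi (fun _ => {false})
      ↔ ∀ e, ω e = true → ¬covers e v := by
    simp only [Set.mem_pi, mem_coe, mem_coveringEdges, Set.mem_singleton_iff, covers]
    exact forall_congr' fun e => by cases ω e <;> simp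
  by_cases h : ∀ e, ω e = true → ¬covers e v
  · rw [if_pos h, Set.indicator_of_mem (hmem.mpr h), Nat.cast_one, Pi.one_apply]
  · rw [if_neg h, Set.indicator_of_notMem (mt hmem.mp h), Nat.cast_zero]

end Covering

section Covariance

variable (K n : ℕ) (s : ℝ)

-- The covariance of the indicators of `a ∈ Z` and `b ∈ Z`.
def covZ (a b : ℕ) : ℝ :=
  (1 - s) ^ #(coveringEdges K n a ∪ coveringEdges K n b)
    - (1 - s) ^ #(coveringEdges K n a) * (1 - s) ^ #(coveringEdges K n b)

variable {K n s}

lemma covZ_comm (a b : ℕ) : covZ K n s a b = covZ K n s b a := by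
  simp only [covZ, union_comm, mul_comm]

lemma covZ_add_one_left (b : ℕ) : covZ K n s (K + 1) b = 0 := by
  simp [covZ, coveringEdges_add_one]

lemma covZ_self {v : ℕ} (hv : v ≤ n) :
    covZ K n s v v = (1 - s) ^ ((v - K - 1) * (n - v + 1))
      - (1 - s) ^ (2 * ((v - K - 1) * (n - v + 1))) := by
  rw [covZ, union_self, ← pow_add, ← two_mul, card_coveringEdges hv]

lemma covZ_of_lt {a b : ℕ} (ha : K + 1 ≤ a) (hab : a < b) (hb : b ≤ n) :
    covZ K n s a b = (1 - s) ^ ((a - K - 1) * (n - a + 1) + (b - a) * (n - b + 1))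
      - (1 - s) ^ ((a - K - 1) * (n - a + 1) + (b - K - 1) * (n - b + 1)) := by
  rw [covZ, ← pow_add, card_coveringEdges_union ha hab.le hb, card_coveringEdges (hab.le.trans hb),
    card_coveringEdges hb]

lemma variance_card_Zset (hs0 : 0 ≤ s) (hs1 : s ≤ 1) :
    (∫ ω, (#(Zset K n ω) : ℝ) ^ 2 ∂(prunMeasure K n s))
        - (∫ ω, (#(Zset K n ω) : ℝ) ∂(prunMeasure K n s)) ^ 2
      = ∑ a ∈ Icc (K + 1) n, ∑ b ∈ Icc (K + 1) n, covZ K n s a b := by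
  simp_rw [card_Zset, integral_sum_indicator_one_sq_sub_sq (fun _ => MeasurableSet.of_discrete),
    ← Set.union_pi, ← coe_union, measureReal_prunMeasure_pi_false hs0 hs1, covZ]

lemma sum_sum_Icc_covZ :
    ∑ a ∈ Icc (K + 1) n, ∑ b ∈ Icc (K + 1) n, covZ K n s a b
      = ∑ a ∈ Icc (K + 2) n, ∑ b ∈ Icc (K + 2) n, covZ K n s a b := by
  have hsub : Icc (K + 2) n ⊆ Icc (K + 1) n := Icc_subset_Icc_left (by omega)
  have hout {a : ℕ} (ha : a ∈ Icc (K + 1) n) (ha' : a ∉ Icc (K + 2) n) : a = K + 1 := by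
    simp only [mem_Icc] at ha ha'; omega
  rw [← sum_subset hsub fun a ha ha' => by simp [hout ha ha', covZ_add_one_left]]
  refine sum_congr rfl fun a _ => (sum_subset hsub fun b hb hb' => ?_).symm
  rw [hout hb hb', covZ_comm, covZ_add_one_left]

end Covariance

theorem stmt6_general (K n : ℕ)
    (s : ℝ) (hs0 : 0 ≤ s) (hs1 : s ≤ 1) :
    (∫ ω, (((Zset K n ω).card : ℝ)) ^ 2 ∂(prunMeasure K n s))
      - (∫ ω, ((Zset K n ω).card : ℝ) ∂(prunMeasure K n s)) ^ 2
    = (∑ v ∈ Finset.Icc (K + 2) n, (1 - s) ^ ((v - K - 1) * (n - v + 1)))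
      - (∑ v ∈ Finset.Icc (K + 2) n, (1 - s) ^ (2 * ((v - K - 1) * (n - v + 1))))
      + 2 * (∑ v₁ ∈ Finset.Icc (K + 2) n, ∑ v₂ ∈ Finset.Ioc v₁ n,
          (1 - s) ^ ((v₁ - K - 1) * (n - v₁ + 1) + (v₂ - v₁) * (n - v₂ + 1)))
      - 2 * (∑ v₁ ∈ Finset.Icc (K + 2) n, ∑ v₂ ∈ Finset.Ioc v₁ n,
          (1 - s) ^ ((v₁ - K - 1) * (n - v₁ + 1) + (v₂ - K - 1) * (n - v₂ + 1))) := by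
  rw [variance_card_Zset hs0 hs1, sum_sum_Icc_covZ,
    sum_sum_eq_sum_add_two_mul_sum_sum_lt _ _ covZ_comm, add_sub_assoc, ← mul_sub,
    ← sum_sub_distrib, ← sum_sub_distrib]
  congr 1
  · exact sum_congr rfl fun v hv => covZ_self (mem_Icc.mp hv).2
  · congr 1
    refine sum_congr rfl fun a ha => ?_
    rw [mem_Icc] at ha
    have hIoc : {b ∈ Icc (K + 2) n | a < b} = Ioc a n := by
      ext b; simp only [mem_filter, mem_Icc, mem_Ioc]; omega
    rw [hIoc, ← sum_sub_distrib]
    exact sum_congr rfl fun b hb => covZ_of_lt (by omega) (mem_Ioc.mp hb).1 (mem_Ioc.mp hb).2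

/-- The variance of `|Z|`, i.e. `E(|Z|²) − (E(|Z|))²`, equals the stated formula. -/
theorem stmt6 (K n : ℕ) (hK : 1 ≤ K) (hn : K + 1 ≤ n)
    (s : ℝ) (hs0 : 0 ≤ s) (hs1 : s ≤ 1) :
    (∫ ω, (((Zset K n ω).card : ℝ)) ^ 2 ∂(prunMeasure K n s))
      - (∫ ω, ((Zset K n ω).card : ℝ) ∂(prunMeasure K n s)) ^ 2
    = (∑ v ∈ Finset.Icc (K + 2) n, (1 - s) ^ ((v - K - 1) * (n - v + 1)))
      - (∑ v ∈ Finset.Icc (K + 2) n, (1 - s) ^ (2 * ((v - K - 1) * (n - v + 1))))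
      + 2 * (∑ v₁ ∈ Finset.Icc (K + 2) n, ∑ v₂ ∈ Finset.Ioc v₁ n,
          (1 - s) ^ ((v₁ - K - 1) * (n - v₁ + 1) + (v₂ - v₁) * (n - v₂ + 1)))
      - 2 * (∑ v₁ ∈ Finset.Icc (K + 2) n, ∑ v₂ ∈ Finset.Ioc v₁ n,
          (1 - s) ^ ((v₁ - K - 1) * (n - v₁ + 1) + (v₂ - K - 1) * (n - v₂ + 1))) :=
  stmt6_general K n s hs0 hs1
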